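/- arXiv:2111.06153 — 3 statements merged into one kernel-verified Lean document; each statement's English description precedes it below -/
import Mathlib

section
/- Let S be a finite extension of ℚ_2 with normalized valuation v and e = v(2). For every unit t of the valuation ring of S, the valuation v(1 − t²) is either even or strictly greater than 2e. -/
/-- The multiplicative value in `ℤₘ₀ = WithZero (Multiplicative ℤ)` corresponding to an element
of additive valuation `k ∈ ℤ`. -/
def ofVal (k : ℤ) : WithZero (Multiplicative ℤ) :=
  (Multiplicative.ofAdd (-k) : Multiplicative ℤ)

lemma ofVal_ne_zero (k : ℤ) : ofVal k ≠ 0 := WithZero.coe_ne_zero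

lemma ofVal_lt_ofVal {a b : ℤ} : ofVal a < ofVal b ↔ b < a := by
  unfold ofVal
  rw [WithZero.coe_lt_coe, Multiplicative.ofAdd_lt, neg_lt_neg_iff]

lemma ofVal_inj {a b : ℤ} : ofVal a = ofVal b ↔ a = b := by
  simp [ofVal, WithZero.coe_inj]

lemma ofVal_mul (a b : ℤ) : ofVal a * ofVal b = ofVal (a + b) := by
  unfold ofVal
  rw [← WithZero.coe_mul, ← ofAdd_add, neg_add]

lemma exists_ofVal {x : WithZero (Multiplicative ℤ)} (hx : x ≠ 0) : ∃ a : ℤ, x = ofVal a := by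
  obtain ⟨m, rfl⟩ := WithZero.ne_zero_iff_exists.mp hx
  exact ⟨-Multiplicative.toAdd m, by simp [ofVal]⟩

/-- Let `S` be a finite extension of `ℚ₂` with normalized valuation `v` and `e = v(2)`.
For every unit `t` of the valuation ring, the additive valuation `v(1 - t²)` is either even
or strictly greater than `2e` (the value `v(0)`, i.e. `+∞`, counts as `> 2e`). -/
theorem stmt_4 {S : Type*} [Field S] [Algebra ℚ_[2] S] [FiniteDimensional ℚ_[2] S]
    (v : Valuation S (WithZero (Multiplicative ℤ)))
    (hsurj : Function.Surjective v)
    (e : ℤ) (he : v (2 : S) = ofVal e) (he1 : 1 ≤ e)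
    (t : S) (ht : v t = 1) :
    (∃ k : ℤ, Even k ∧ v (1 - t ^ 2) = ofVal k) ∨ v (1 - t ^ 2) < ofVal (2 * e) := by
  have h2t : v (2 * t) = ofVal e := by rw [map_mul, he, ht, mul_one]
  have hfac : (1 : S) - t ^ 2 = (1 - t) * (1 + t) := by ring
  rw [hfac, map_mul]
  by_cases hx : v (1 - t) = 0
  · right; rw [hx, zero_mul]; exact lt_of_le_of_ne bot_le (Ne.symm (ofVal_ne_zero _))
  by_cases hy : v (1 + t) = 0
  · right; rw [hy, mul_zero]; exact lt_of_le_of_ne bot_le (Ne.symm (ofVal_ne_zero _))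
  obtain ⟨a, ha⟩ := exists_ofVal hx
  obtain ⟨b, hb⟩ := exists_ofVal hy
  rw [ha, hb, ofVal_mul]
  rcases lt_or_ge a e with hae | hae
  · -- v(1-t) big: v(1+t) = v(1-t), so b = a
    have hsum : (1 : S) + t = (1 - t) + 2 * t := by ring
    have hne : v (1 - t) ≠ v (2 * t) := by
      rw [ha, h2t, Ne, ofVal_inj]; exact hae.ne
    have : v (1 + t) = max (v (1 - t)) (v (2 * t)) := by
      rw [hsum]; exact Valuation.map_add_of_distinct_val v hne
    rw [ha, hb, h2t, max_eq_left (le_of_lt (ofVal_lt_ofVal.mpr hae)), ofVal_inj] at this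
    left; exact ⟨a + b, by rw [this]; exact Even.add_self a, rfl⟩
  rcases lt_or_ge b e with hbe | hbe
  · have hsum : (1 : S) - t = (1 + t) + (-(2 * t)) := by ring
    have hneg : v (-(2 * t)) = ofVal e := by rw [v.map_neg, h2t]
    have hne : v (1 + t) ≠ v (-(2 * t)) := by
      rw [hb, hneg, Ne, ofVal_inj]; exact hbe.ne
    have : v (1 - t) = max (v (1 + t)) (v (-(2 * t))) := by
      rw [hsum]; exact Valuation.map_add_of_distinct_val v hne
    rw [ha, hb, hneg, max_eq_left (le_of_lt (ofVal_lt_ofVal.mpr hbe)), ofVal_inj] at this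
    left; exact ⟨a + b, by rw [this]; exact Even.add_self b, rfl⟩
  · by_cases hev : Even (a + b)
    · left; exact ⟨a + b, hev, rfl⟩
    · right
      rw [ofVal_lt_ofVal]
      have hge : 2 * e ≤ a + b := by linarith
      rcases hge.lt_or_eq with h | h
      · exact h
      · exact absurd (h ▸ even_two_mul e : Even (a + b)) hev
end

section
/- Let S be a finite extension of ℚ_2 with normalized valuation v and e = v(2), and let q be an integer with q ≡ 5 (mod 8) such that q is not a square in S. Then for every unit t of the valuation ring of S, the valuation v(1 − q·t²) is even. -/
open Filter Topology WithZero

namespace PadicInt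
variable {p : ℕ} [Fact p.Prime]

lemma norm_lt_one_iff_toZMod_eq_zero (x : ℤ_[p]) : ‖x‖ < 1 ↔ toZMod x = 0 := by
  rw [← mem_nonunits, ← IsLocalRing.mem_maximalIdeal, ← ker_toZMod, RingHom.mem_ker]

lemma norm_pow_sub_one_sub_one_lt_one {u : ℤ_[p]} (hu : ‖u‖ = 1) :
    ‖u ^ (p - 1) - 1‖ < 1 := by
  have hu0 : toZMod u ≠ 0 := by
    rw [Ne, ← norm_lt_one_iff_toZMod_eq_zero, hu]; exact lt_irrefl 1
  rw [norm_lt_one_iff_toZMod_eq_zero, map_sub, map_pow, map_one,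
    ZMod.pow_card_sub_one_eq_one hu0, sub_self]

lemma norm_natCast_p_add_one : ‖((p + 1 : ℕ) : ℤ_[p])‖ = 1 := by
  refine le_antisymm (norm_le_one _) (not_lt.mp fun h => ?_)
  rw [norm_lt_one_iff_toZMod_eq_zero, map_natCast, Nat.cast_add, ZMod.natCast_self, zero_add,
    Nat.cast_one] at h
  exact one_ne_zero h

lemma exists_pow_pow_eq {ℓ : ℕ} (hℓ : ‖(ℓ : ℤ_[p])‖ = 1) (n : ℕ) :
    ∀ x : ℤ_[p], ‖x - 1‖ < 1 → ∃ r : ℤ_[p], ‖r - 1‖ < 1 ∧ r ^ ℓ ^ n = x := by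
  induction n with
  | zero => exact fun x hx => ⟨x, hx, by rw [pow_zero, pow_one]⟩
  | succ n ih =>
    intro x hx
    let F : Polynomial ℤ_[p] := .X ^ ℓ - .C x
    have hF : ‖F.aeval (1 : ℤ_[p])‖ < ‖F.derivative.aeval (1 : ℤ_[p])‖ ^ 2 := by
      simp [F, Polynomial.derivative_X_pow, hℓ, norm_sub_rev, hx]
    obtain ⟨z, hz, hz1, -⟩ := hensels_lemma hF
    obtain ⟨r, hr1, hrz⟩ := ih z (by simpa [F, Polynomial.derivative_X_pow, hℓ] using hz1)
    refine ⟨r, hr1, ?_⟩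
    rw [pow_succ, pow_mul, hrz, ← sub_eq_zero]
    simpa [F] using hz

end PadicInt

namespace Valued
variable {R Γ₀ : Type*} [Ring R] [LinearOrderedCommGroupWithZero Γ₀] [Valued R Γ₀]

instance : NonarchimedeanAddGroup R where
  is_nonarchimedean U hU := by
    obtain ⟨γ, hγ⟩ := mem_nhds_zero.1 hU
    exact ⟨⟨v.restrict.ltAddSubgroup γ, isOpen_ball R γ.1⟩, hγ⟩

lemma tendsto_nhds_zero_of_forall_lt {α : Type*} {l : Filter α} {f : α → R}
    (h : ∀ γ : Γ₀ˣ, ∀ᶠ a in l, v (f a) < γ) : Tendsto f l (𝓝 0) := by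
  refine (hasBasis_nhds_zero R Γ₀).tendsto_right_iff.2 fun γ _ => ?_
  have := h (Units.map (MonoidWithZeroHom.ValueGroup₀.embedding
    (f := .ofClass (v : Valuation R Γ₀))) γ)
  simpa only [Set.mem_ofPred_eq, Valuation.restrict_lt_iff_lt_embedding, Units.coe_map,
    MonoidHom.coe_coe] using this

lemma tendsto_nhds_zero_of_le_pow [MulArchimedean Γ₀] {δ : Γ₀} (hδ : δ < 1) {f : ℕ → R}
    (hf : ∀ n, v (f n) ≤ δ ^ n) : Tendsto f atTop (𝓝 0) := by
  refine tendsto_nhds_zero_of_forall_lt fun γ => ?_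
  obtain ⟨N, hN⟩ := exists_pow_lt₀ hδ γ
  filter_upwards [eventually_ge_atTop N] with n hn
  exact ((hf n).trans (pow_le_pow_right_of_le_one' hδ.le hn)).trans_lt hN

section Complete
variable {K : Type*} [Field K] [Valued K Γ₀] [MulArchimedean Γ₀] [CompleteSpace K]

/-- The root is the limit of the iteration `y ↦ x - y ^ 2`, which contracts the ball
`{y | v y ≤ v x}` by the factor `v x`. -/
lemma exists_sq_add_self_eq {x : K} (hx : v x < 1) : ∃ y : K, y ^ 2 + y = x := by
  let z : ℕ → K := fun n => (fun y => x - y ^ 2)^[n] 0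
  have hz (n : ℕ) : z (n + 1) = x - z n ^ 2 := Function.iterate_succ_apply' _ _ _
  have hbound (n : ℕ) : v (z n) ≤ v x := by
    induction n with
    | zero => simp [z]
    | succ n ih =>
      rw [hz]
      refine v.map_sub_le le_rfl ?_
      rw [map_pow]
      exact (pow_le_pow_left₀ zero_le ih 2).trans (pow_le_of_le_one zero_le hx.le two_ne_zero)
  have hstep (n : ℕ) : v (z (n + 1) - z n) ≤ v x ^ n := by
    induction n with
    | zero => simpa [hz, z] using hx.le
    | succ n ih =>
      have : z (n + 2) - z (n + 1) = -((z (n + 1) - z n) * (z n + z (n + 1))) := by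
        rw [hz (n + 1), hz n]; ring
      rw [this, Valuation.map_neg, map_mul, pow_succ]
      exact mul_le_mul' ih (v.map_add_le (hbound n) (hbound (n + 1)))
  obtain ⟨y, hy⟩ := cauchySeq_tendsto_of_complete <|
    NonarchimedeanAddGroup.cauchySeq_of_tendsto_sub_nhds_zero <|
      tendsto_nhds_zero_of_le_pow hx hstep
  have hy' : Tendsto (fun n => z (n + 1)) atTop (𝓝 (x - y ^ 2)) := by
    simpa only [hz] using tendsto_const_nhds.sub (hy.pow 2)
  exact ⟨y, by linear_combination tendsto_nhds_unique (hy.comp (tendsto_add_atTop_nat 1)) hy'⟩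

lemma exists_sq_eq_one_sub {c : K} (hc : v c < v (2 : K) ^ 2) : ∃ s : K, s ^ 2 = 1 - c := by
  have h2 : (2 : K) ≠ 0 := by
    rintro h; rw [h, map_zero, zero_pow two_ne_zero] at hc; exact not_lt_zero hc
  have hx : v (-c / 2 ^ 2) < 1 := by
    rwa [map_div₀, Valuation.map_neg, map_pow, div_lt_one₀ (lt_of_le_of_lt zero_le hc)]
  obtain ⟨y, hy⟩ := exists_sq_add_self_eq hx
  exact ⟨1 + 2 * y, by field_simp at hy; linear_combination hy⟩

end Complete

end Valued

namespace Padic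
variable {p : ℕ} [Fact p.Prime]

section Valuation
variable (w : Valuation ℚ_[p] ℤᵐ⁰)

lemma map_eq_one_of_norm_eq_one {u : ℚ_[p]} (hu : ‖u‖ = 1) : w u = 1 := by
  have hu0 : w u ≠ 0 := (w.ne_zero_iff).2 (norm_ne_zero_iff.1 (by rw [hu]; exact one_ne_zero))
  have hdvd (n : ℕ) : ((p + 1 : ℕ) : ℤ) ^ n ∣ (p - 1) • log (w u) := by
    obtain ⟨r, -, hr⟩ := PadicInt.exists_pow_pow_eq PadicInt.norm_natCast_p_add_one n _
      (PadicInt.norm_pow_sub_one_sub_one_lt_one (u := ⟨u, hu.le⟩) hu)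
    have hr' : (r : ℚ_[p]) ^ (p + 1) ^ n = u ^ (p - 1) := by
      exact_mod_cast congrArg ((↑) : ℤ_[p] → ℚ_[p]) hr
    refine ⟨log (w r), ?_⟩
    rw [← log_pow, ← map_pow, ← hr', map_pow, log_pow, nsmul_eq_mul]
    push_cast; ring
  have hlog : log (w u) = 0 := by
    by_contra hne
    have hp1 : (p - 1) • log (w u) ≠ 0 :=
      smul_ne_zero (Nat.sub_ne_zero_of_lt (Fact.out : p.Prime).one_lt) hne
    obtain ⟨n, hn⟩ := Int.finiteMultiplicity_iff (a := ((p + 1 : ℕ) : ℤ)).2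
      ⟨by rw [Int.natAbs_natCast]; exact (Nat.succ_lt_succ (Fact.out : p.Prime).pos).ne', hp1⟩
    exact hn (hdvd (n + 1))
  rw [← exp_log hu0, hlog, exp_zero]

lemma map_intCast_eq_one {m : ℤ} (hm : ¬(p : ℤ) ∣ m) : w (m : ℚ_[p]) = 1 :=
  map_eq_one_of_norm_eq_one w <| le_antisymm (norm_int_le_one m) <|
    not_lt.1 fun h => hm (norm_intCast_lt_one_iff.1 h)

lemma map_le_one_of_norm_le_one (hp : w p ≤ 1) {x : ℚ_[p]} (hx : ‖x‖ ≤ 1) :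
    w x ≤ 1 := by
  let y : ℤ_[p] := ⟨x, hx⟩
  rcases eq_or_ne y 0 with hy | hy
  · rw [show x = 0 from congrArg ((↑) : ℤ_[p] → ℚ_[p]) hy, map_zero]
    exact zero_le
  have hxy : x = (PadicInt.unitCoeff hy : ℚ_[p]) * (p : ℚ_[p]) ^ y.valuation := by
    exact_mod_cast congrArg ((↑) : ℤ_[p] → ℚ_[p]) (PadicInt.unitCoeff_spec hy)
  rw [hxy, map_mul, map_eq_one_of_norm_eq_one w (PadicInt.norm_units _), one_mul, map_pow]
  exact pow_le_one' hp _

lemma map_le_pow_of_norm_le (hp : w p ≤ 1) {x : ℚ_[p]} {N : ℕ}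
    (hx : ‖x‖ ≤ ‖(p : ℚ_[p]) ^ N‖) : w x ≤ w p ^ N := by
  have hpN : (p : ℚ_[p]) ^ N ≠ 0 :=
    pow_ne_zero _ (Nat.cast_ne_zero.2 (Fact.out : p.Prime).ne_zero)
  have hdiv : w (x / (p : ℚ_[p]) ^ N) ≤ 1 := map_le_one_of_norm_le_one w hp <| by
    rwa [norm_div, div_le_one (norm_pos_iff.2 hpN)]
  rw [← mul_div_cancel₀ x hpN, map_mul, map_pow]
  exact mul_le_of_le_one_right' hdiv

end Valuation

section Topology
variable {S : Type*} [Field S] [Valued S ℤᵐ⁰] [Algebra ℚ_[p] S]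

lemma continuous_algebraMap (hp : Valued.v (p : S) < 1) : Continuous (algebraMap ℚ_[p] S) := by
  refine continuous_of_continuousAt_zero _ ?_
  rw [ContinuousAt, map_zero]
  refine Valued.tendsto_nhds_zero_of_forall_lt fun γ => ?_
  obtain ⟨N, hN⟩ := exists_pow_lt₀ hp γ
  have hpN : 0 < ‖(p : ℚ_[p]) ^ N‖ :=
    norm_pos_iff.2 (pow_ne_zero _ (Nat.cast_ne_zero.2 (Fact.out : p.Prime).ne_zero))
  filter_upwards [tendsto_norm_zero.eventually (ge_mem_nhds hpN)] with x hx
  have hw := map_le_pow_of_norm_le (Valued.v.comap (algebraMap ℚ_[p] S))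
    (by simpa using hp.le) hx
  simp only [Valuation.comap_apply, map_natCast] at hw
  exact hw.trans_lt hN

lemma completeSpace_of_finiteDimensional [FiniteDimensional ℚ_[p] S]
    (hp : Valued.v (p : S) < 1) : CompleteSpace S :=
  haveI := continuousSMul_of_algebraMap ℚ_[p] S (continuous_algebraMap hp)
  FiniteDimensional.complete ℚ_[p] S

end Topology

end Padic

lemma Valuation.map_mul_eq_sq_of_add_eq {R Γ₀ : Type*} [CommRing R]
    [LinearOrderedCommGroupWithZero Γ₀] (v : Valuation R Γ₀) {x y u : R} (h : x + y = u)
    (hlt : v u ^ 2 < v (x * y)) : v (x * y) = v x ^ 2 := by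
  by_cases hxy : v x = v y
  · rw [map_mul, hxy, sq]
  refine absurd hlt (not_lt.2 ?_)
  rw [← h, v.map_add_of_distinct_val hxy, map_mul, sq]
  exact mul_le_mul' (le_max_left _ _) (le_max_right _ _)

lemma ofVal_eq_exp (k : ℤ) : ofVal k = exp (-k) := rfl

lemma exists_even_ofVal_eq_of_eq_sq {x : ℤᵐ⁰} (hx : x ≠ 0) (h : ∃ a, x = a ^ 2) :
    ∃ k : ℤ, Even k ∧ x = ofVal k := by
  obtain ⟨a, h⟩ := h
  have ha : a ≠ 0 := by rintro rfl; exact hx (h.trans (zero_pow two_ne_zero))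
  refine ⟨-2 * log a, ⟨-log a, by ring⟩, ?_⟩
  rw [h, ofVal_eq_exp, ← exp_log ha, ← exp_nsmul, log_exp, two_nsmul]
  ring_nf

lemma map_intCast_sub_one_of_emod_eight_eq_five {S : Type*} [Field S] [Algebra ℚ_[2] S]
    (v : Valuation S ℤᵐ⁰) {q : ℤ} (hq : q % 8 = 5) : v ((q : S) - 1) = v 2 ^ 2 := by
  obtain ⟨m, hqm, hm⟩ : ∃ m : ℤ, q = 4 * m + 1 ∧ ¬(2 : ℤ) ∣ m :=
    ⟨q / 4, by omega, by omega⟩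
  have hm1 : v (m : S) = 1 := by
    simpa using Padic.map_intCast_eq_one (v.comap (algebraMap ℚ_[2] S)) hm
  rw [hqm, Int.cast_add, Int.cast_mul, Int.cast_ofNat, Int.cast_one, add_sub_cancel_right,
    map_mul, hm1, mul_one, show (4 : S) = 2 ^ 2 by norm_num, map_pow]

theorem stmt_5_general {S : Type*} [Field S] [Algebra ℚ_[2] S] [FiniteDimensional ℚ_[2] S]
    (v : Valuation S (WithZero (Multiplicative ℤ)))
    (e : ℤ) (he : v (2 : S) = ofVal e) (he1 : 1 ≤ e)
    (q : ℤ) (hq : q % 8 = 5) (hqsq : ¬∃ s : S, s ^ 2 = (q : S))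
    (t : S) (ht : v t = 1) :
    ∃ k : ℤ, Even k ∧ v (1 - (q : S) * t ^ 2) = ofVal k := by
  let : Valued S ℤᵐ⁰ := Valued.mk' v
  have h2 : v 2 < 1 := by rw [he, ofVal_eq_exp, ← exp_zero, exp_lt_exp]; omega
  have : CompleteSpace S :=
    Padic.completeSpace_of_finiteDimensional (p := 2) (by rw [Nat.cast_ofNat]; exact h2)
  have hq1 : v (((q : S) - 1) * t ^ 2) = v 2 ^ 2 := by
    rw [map_mul, map_intCast_sub_one_of_emod_eight_eq_five v hq, map_pow, ht, one_pow, mul_one]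
  set c := 1 - (q : S) * t ^ 2 with hc
  have ht0 : t ≠ 0 := by rintro rfl; simp at ht
  have hc0 : c ≠ 0 := fun h0 => hqsq ⟨t⁻¹, by
    rw [inv_pow, inv_eq_of_mul_eq_one_left (sub_eq_zero.1 h0).symm]⟩
  have hc4 : v 2 ^ 2 ≤ v c := by
    by_contra! hlt
    obtain ⟨s, hs⟩ := Valued.exists_sq_eq_one_sub hlt
    refine hqsq ⟨s / t, ?_⟩
    rw [div_pow, hs, hc, sub_sub_cancel, mul_div_cancel_right₀ _ (pow_ne_zero 2 ht0)]
  refine exists_even_ofVal_eq_of_eq_sq ((v.ne_zero_iff).2 hc0) ?_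
  rcases hc4.eq_or_lt with heq | hlt
  · exact ⟨v 2, heq.symm⟩
  have h1t : v ((1 - t) * (1 + t)) = v c := by
    rw [show (1 - t) * (1 + t) = c + ((q : S) - 1) * t ^ 2 by rw [hc]; ring,
      v.map_add_eq_of_lt_left (hq1 ▸ hlt)]
  rw [← h1t]
  exact ⟨_, v.map_mul_eq_sq_of_add_eq (by ring) (h1t ▸ hlt)⟩

/-- Let `S` be a finite extension of `ℚ₂` with normalized valuation `v` and `e = v(2)`, and
let `q ≡ 5 (mod 8)` be an integer which is not a square in `S`.  Then for every unit `t` of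
the valuation ring of `S`, the additive valuation `v(1 - q·t²)` is even. -/
theorem stmt_5 {S : Type*} [Field S] [Algebra ℚ_[2] S] [FiniteDimensional ℚ_[2] S]
    (v : Valuation S (WithZero (Multiplicative ℤ)))
    (hsurj : Function.Surjective v)
    (e : ℤ) (he : v (2 : S) = ofVal e) (he1 : 1 ≤ e)
    (q : ℤ) (hq : q % 8 = 5) (hqsq : ¬∃ s : S, s ^ 2 = (q : S))
    (t : S) (ht : v t = 1) :
    ∃ k : ℤ, Even k ∧ v (1 - (q : S) * t ^ 2) = ofVal k :=
  stmt_5_general v e he he1 q hq hqsq t ht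
end

section
/- Let S be a finite extension of ℚ_3 with normalized valuation v in which −1 is not a square. Suppose x, y, z, w are elements of the valuation ring of S with min(v(x), v(y), v(z), v(w)) = 0 satisfying w² = −6x⁴ − 3y⁴ + 2z⁴. Then v(−x² − y² + z²) = 0; in particular it is even. -/
/-!
Reducing the equation modulo the maximal ideal gives `w² + (z²)² ≡ 0`. Since `-1` is not a square
in `S`, and `S` is complete for `v`, Newton's method shows that `-1` is not a square in the
residue field either; equivalently `v (a² + b²) = max (v a) (v b) ^ 2` for all `a, b`. Hence
`v z, v w < 1`, so `max (v x) (v y) = 1`, so `x² + y²` is a unit while `z²` is not.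

Completeness of `S` comes from finite-dimensionality over `ℚ₃`, once `v` is known to be continuous
on `ℚ₃`: this holds because a `3`-adic unit has `n`-th roots, up to a fixed power, for infinitely
many `n`, which forces its valuation to be `1`.
-/

open Filter Topology WithZero

theorem WithZero.eq_one_of_forall_exists_pow_eq {γ : ℤᵐ⁰} (hγ : γ ≠ 0)
    (h : ∀ N : ℕ, ∃ n > N, ∃ δ : ℤᵐ⁰, δ ^ n = γ) : γ = 1 := by
  obtain ⟨n, hn, δ, rfl⟩ := h (log γ).natAbs
  have hlog : log (δ ^ n) = 0 :=
    Int.eq_zero_of_dvd_of_natAbs_lt_natAbs (d := n) ⟨log δ, by simp⟩ (by simpa using hn)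
  rw [← exp_log hγ, hlog, exp_zero]

theorem PadicInt.exists_pow_eq_of_norm_sub_one_lt_one {p : ℕ} [hp : Fact p.Prime] {c : ℤ_[p]}
    (hc : ‖c - 1‖ < 1) {n : ℕ} (hn : ¬ p ∣ n) : ∃ s : ℤ_[p], s ^ n = c := by
  have hderiv : ‖(n : ℤ_[p])‖ = 1 :=
    PadicInt.norm_natCast_eq_one_iff.mpr ((Nat.Prime.coprime_iff_not_dvd hp.out).mpr hn)
  obtain ⟨s, hs, -⟩ := hensels_lemma (p := p) (R := ℤ_[p])
    (F := Polynomial.X ^ n - Polynomial.C c) (a := 1)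
    (by simpa [Polynomial.derivative_X_pow, hderiv, norm_sub_rev] using hc)
  exact ⟨s, by simpa [sub_eq_zero] using hs⟩

theorem PadicInt.norm_pow_sub_one_lt_one {p : ℕ} [Fact p.Prime] {b : ℤ_[p]} (hb : ‖b‖ = 1) :
    ‖b ^ (p - 1) - 1‖ < 1 := by
  have hb0 : toZMod b ≠ 0 := ((PadicInt.isUnit_iff.mpr hb).map toZMod).ne_zero
  have hker : b ^ (p - 1) - 1 ∈ RingHom.ker (toZMod (p := p)) := by
    simp [RingHom.mem_ker, ZMod.pow_card_sub_one_eq_one hb0]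
  rwa [ker_toZMod, IsLocalRing.mem_maximalIdeal, PadicInt.mem_nonunits] at hker

namespace Valuation

theorem map_two_eq_one_of_map_three_lt_one {R Γ₀ : Type*} [Ring R]
    [LinearOrderedCommGroupWithZero Γ₀] (v : Valuation R Γ₀) (h : v 3 < 1) : v 2 = 1 := by
  rw [show (2 : R) = -1 + 3 by norm_num, v.map_add_eq_of_lt_left (by simpa using h)]
  simp

variable {p : ℕ} [hp : Fact p.Prime] {R : Type*} [Ring R] [Algebra ℚ_[p] R] (v : Valuation R ℤᵐ⁰)

theorem map_algebraMap_ne_zero {b : ℚ_[p]} (hb : b ≠ 0) : v (algebraMap ℚ_[p] R b) ≠ 0 := by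
  intro h
  have : v (algebraMap ℚ_[p] R b) * v (algebraMap ℚ_[p] R b⁻¹) = 1 := by
    rw [← map_mul, ← map_mul, mul_inv_cancel₀ hb, map_one, map_one]
  simp [h] at this

theorem map_algebraMap_eq_one_of_norm_eq_one {b : ℚ_[p]} (hb : ‖b‖ = 1) :
    v (algebraMap ℚ_[p] R b) = 1 := by
  let B : ℤ_[p] := ⟨b, hb.le⟩
  have hroots : ∀ N : ℕ, ∃ n > N, ∃ δ : ℤᵐ⁰, δ ^ n = v (algebraMap ℚ_[p] R b) ^ (p - 1) := by
    intro N
    have hndvd : ¬ p ∣ p * N + 1 := fun h =>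
      hp.out.one_lt.ne' (Nat.dvd_one.mp ((Nat.dvd_add_right (dvd_mul_right p N)).mp h))
    obtain ⟨s, hs⟩ := PadicInt.exists_pow_eq_of_norm_sub_one_lt_one
      (PadicInt.norm_pow_sub_one_lt_one (b := B) hb) hndvd
    refine ⟨p * N + 1, by nlinarith [hp.out.two_le], v (algebraMap ℚ_[p] R s), ?_⟩
    rw [← map_pow, ← map_pow, ← map_pow, ← map_pow, ← PadicInt.coe_pow, hs, PadicInt.coe_pow]
  have hb0 : b ≠ 0 := by rintro rfl; simp at hb
  have := WithZero.eq_one_of_forall_exists_pow_eq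
    (pow_ne_zero _ (v.map_algebraMap_ne_zero hb0)) hroots
  exact (pow_eq_one_iff.mp this).resolve_right (by have := hp.out.two_le; omega)

theorem map_algebraMap_le_pow_of_norm_le (hv : v (p : R) ≤ 1) {b : ℚ_[p]} {k : ℕ}
    (hb : ‖b‖ ≤ (p : ℝ) ^ (-(k : ℤ))) : v (algebraMap ℚ_[p] R b) ≤ v (p : R) ^ k := by
  rcases eq_or_ne b 0 with rfl | hb0
  · simp
  have hpos : (1 : ℝ) < p := by exact_mod_cast hp.out.one_lt
  rw [Padic.norm_eq_zpow_neg_valuation hb0, zpow_le_zpow_iff_right₀ hpos, neg_le_neg_iff] at hb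
  obtain ⟨j, hj⟩ := Int.eq_ofNat_of_zero_le (le_trans (Int.natCast_nonneg k) hb)
  have hkj : k ≤ j := by omega
  have hu : ‖b / (p : ℚ_[p]) ^ j‖ = 1 := by
    rw [norm_div, norm_pow, Padic.norm_eq_zpow_neg_valuation hb0, Padic.norm_p, hj]
    simp [zpow_neg, zpow_natCast]
  have hb_eq : b = b / (p : ℚ_[p]) ^ j * (p : ℚ_[p]) ^ j := by
    rw [div_mul_cancel₀ _ (pow_ne_zero _ (by exact_mod_cast hp.out.ne_zero))]
  rw [hb_eq, map_mul, map_mul, v.map_algebraMap_eq_one_of_norm_eq_one hu, one_mul, map_pow,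
    map_natCast, map_pow]
  exact pow_le_pow_right_of_le_one' hv hkj

end Valuation

namespace Valued

section

variable {R Γ₀ : Type*} [Ring R] [LinearOrderedCommGroupWithZero Γ₀] [Valued R Γ₀]

theorem tendsto_zero_of_v_le {α : Type*} {l : Filter α} {f g : α → R}
    (hg : Tendsto g l (𝓝 0)) (hfg : ∀ᶠ a in l, v (f a) ≤ v (g a)) : Tendsto f l (𝓝 0) := by
  rw [(hasBasis_nhds_zero R Γ₀).tendsto_right_iff] at hg ⊢
  intro γ _
  filter_upwards [hg γ trivial, hfg] with a hga hfga
  exact ((Valuation.restrict_le_iff _).mpr hfga).trans_lt hga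

instance inst_s11 : NonarchimedeanAddGroup R where
  is_nonarchimedean U hU := by
    obtain ⟨γ, hγ⟩ := mem_nhds_zero.mp hU
    let H := v.restrict.ltAddSubgroup γ
    exact ⟨⟨H, H.isOpen_of_mem_nhds (g := 0) (mem_nhds_zero.mpr ⟨γ, le_rfl⟩)⟩, hγ⟩

end

theorem continuous_algebraMap_padic {p : ℕ} [hp : Fact p.Prime] {R : Type*} [Ring R]
    [Valued R ℤᵐ⁰] [Algebra ℚ_[p] R] (hv : v (p : R) < 1) :
    Continuous (algebraMap ℚ_[p] R) := by
  refine continuous_of_continuousAt_zero (algebraMap ℚ_[p] R) ?_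
  rw [ContinuousAt, map_zero, (hasBasis_nhds_zero R ℤᵐ⁰).tendsto_right_iff]
  intro γ _
  obtain ⟨k, hk⟩ := ((hasBasis_nhds_zero R ℤᵐ⁰).tendsto_right_iff.mp
    (tendsto_zero_pow_of_v_lt_one hv) γ trivial).exists
  filter_upwards [Metric.closedBall_mem_nhds (0 : ℚ_[p])
    (zpow_pos (by exact_mod_cast hp.out.pos) _ : (0 : ℝ) < (p : ℝ) ^ (-(k : ℤ)))] with b hb
  refine ((Valuation.restrict_le_iff _).mpr ?_).trans_lt hk
  rw [map_pow]
  exact v.map_algebraMap_le_pow_of_norm_le hv.le (by simpa using hb)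

variable {K Γ₀ : Type*} [Field K] [LinearOrderedCommGroupWithZero Γ₀] [MulArchimedean Γ₀]
  [Valued K Γ₀] [CompleteSpace K]

-- Newton's method for `X ^ 2 - a`, under which the residual `f n ^ 2 - a` gets squared at each step
theorem exists_sq_eq_of_v_sq_sub_lt_one (h2 : v (2 : K) = 1) {a u : K} (ha : v a = 1)
    (hu : v (u ^ 2 - a) < 1) : ∃ s : K, s ^ 2 = a := by
  have h20 : (2 : K) ≠ 0 := by rintro h; simp [h] at h2
  let f : ℕ → K := fun n ↦ Nat.rec u (fun _ t ↦ (t + a / t) / 2) n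
  have hf : ∀ n, f (n + 1) = (f n + a / f n) / 2 := fun _ ↦ rfl
  have hinv : ∀ n, v (f n) = 1 ∧ v (f n ^ 2 - a) ≤ v ((u ^ 2 - a) ^ 2 ^ n) := by
    intro n
    induction n with
    | zero =>
      refine ⟨?_, by simp [f]⟩
      have : v (u ^ 2) = 1 := by
        rw [show u ^ 2 = a + (u ^ 2 - a) by ring, v.map_add_eq_of_lt_left (hu.trans_eq ha.symm), ha]
      exact (pow_eq_one_iff.mp (by rwa [← map_pow])).resolve_right two_ne_zero
    | succ n ih =>
      obtain ⟨hfn1, hres⟩ := ih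
      have hfn : f n ≠ 0 := by rintro h; simp [h] at hfn1
      have hsmall : v (f n ^ 2 - a) < v (2 * a) := by
        rw [map_mul, h2, ha, one_mul]
        exact hres.trans_lt (by rw [map_pow]; exact pow_lt_one' hu (by positivity))
      have hnext : f (n + 1) = (2 * a + (f n ^ 2 - a)) / (2 * f n) := by
        rw [hf]; field_simp; ring
      have hres_next : f (n + 1) ^ 2 - a = (f n ^ 2 - a) ^ 2 / (2 * f n) ^ 2 := by
        rw [hf]; field_simp; ring
      constructor
      · rw [hnext, map_div₀, v.map_add_eq_of_lt_left hsmall]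
        simp [h2, ha, hfn1]
      · rw [hres_next, map_div₀, map_pow, map_pow, map_mul, h2, hfn1, one_mul, one_pow, div_one,
          pow_succ 2 n, pow_mul, map_pow]
        exact pow_le_pow_left₀ zero_le hres 2
  have hres : Tendsto (fun n ↦ f n ^ 2 - a) atTop (𝓝 0) :=
    tendsto_zero_of_v_le ((tendsto_zero_pow_of_v_lt_one hu).comp
      (tendsto_pow_atTop_atTop_of_one_lt one_lt_two)) (Eventually.of_forall fun n ↦ (hinv n).2)
  have hstep : ∀ n, v (f (n + 1) - f n) = v (f n ^ 2 - a) := by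
    intro n
    have hfn : f n ≠ 0 := by rintro h; simpa [h] using (hinv n).1
    rw [show f (n + 1) - f n = -(f n ^ 2 - a) / (2 * f n) by rw [hf]; field_simp; ring,
      map_div₀, Valuation.map_neg, map_mul, h2, (hinv n).1, one_mul, div_one]
  have hcauchy : CauchySeq f := NonarchimedeanAddGroup.cauchySeq_of_tendsto_sub_nhds_zero
    (tendsto_zero_of_v_le hres (Eventually.of_forall fun n ↦ (hstep n).le))
  obtain ⟨s, hs⟩ := cauchySeq_tendsto_of_complete hcauchy
  exact ⟨s, sub_eq_zero.mp (tendsto_nhds_unique ((hs.pow 2).sub_const a) hres)⟩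

theorem v_sq_add_sq (h2 : v (2 : K) = 1) (hK : ¬∃ s : K, s ^ 2 = -1) (x y : K) :
    v (x ^ 2 + y ^ 2) = max (v x) (v y) ^ 2 := by
  wlog hyx : v y ≤ v x generalizing x y
  · rw [add_comm, max_comm]
    exact this y x (le_of_not_ge hyx)
  rcases eq_or_ne x 0 with rfl | hx
  · simp_all
  have hu : v (y / x) ≤ 1 := by rwa [map_div₀, div_le_one₀ ((v.pos_iff).mpr hx)]
  have hunit : v ((y / x) ^ 2 - -1) = 1 := by
    refine le_antisymm ?_ (not_lt.mp fun hlt ↦ hK (exists_sq_eq_of_v_sq_sub_lt_one h2 (by simp) hlt))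
    exact (v.map_sub _ _).trans (max_le (by simpa using pow_le_one' hu 2) (by simp))
  rw [max_eq_left hyx, show x ^ 2 + y ^ 2 = x ^ 2 * ((y / x) ^ 2 - -1) by field_simp; ring,
    map_mul, hunit, mul_one, map_pow]

end Valued

theorem stmt_11_general {S : Type*} [Field S] [Algebra ℚ_[3] S] [FiniteDimensional ℚ_[3] S]
    (v : Valuation S (WithZero (Multiplicative ℤ)))
    (h3 : v (3 : S) < 1)
    (hneg : ¬∃ s : S, s ^ 2 = (-1 : S))
    (x y z w : S)
    (hx : v x ≤ 1) (hy : v y ≤ 1) (hz : v z ≤ 1)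
    (hmin : max (max (v x) (v y)) (max (v z) (v w)) = 1)
    (heq : w ^ 2 = -6 * x ^ 4 - 3 * y ^ 4 + 2 * z ^ 4) :
    v (-x ^ 2 - y ^ 2 + z ^ 2) = 1 := by
  let _ : Valued S ℤᵐ⁰ := Valued.mk' v
  have : ContinuousSMul ℚ_[3] S := continuousSMul_of_algebraMap _ _
    (Valued.continuous_algebraMap_padic (p := 3) (show v (3 : ℕ) < 1 by simpa using h3))
  have : CompleteSpace S := FiniteDimensional.complete ℚ_[3] S
  have hsq : ∀ a b : S, v (a ^ 2 + b ^ 2) = max (v a) (v b) ^ 2 :=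
    Valued.v_sq_add_sq (v.map_two_eq_one_of_map_three_lt_one h3) hneg
  have hwz : v (w ^ 2 + (z ^ 2) ^ 2) < 1 := by
    have hint : z ^ 4 - 2 * x ^ 4 - y ^ 4 ∈ v.integer := by
      have : x ∈ v.integer := hx
      have : y ∈ v.integer := hy
      have : z ∈ v.integer := hz
      aesop
    rw [show w ^ 2 + (z ^ 2) ^ 2 = 3 * (z ^ 4 - 2 * x ^ 4 - y ^ 4) by linear_combination heq,
      map_mul]
    exact mul_lt_one_of_lt_of_le h3 hint
  have hzw : max (v z) (v w) < 1 := by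
    rw [hsq, pow_lt_one_iff two_ne_zero, map_pow, max_lt_iff, pow_lt_one_iff two_ne_zero] at hwz
    exact max_lt hwz.2 hwz.1
  have hxy : max (v x) (v y) = 1 :=
    (max_eq_iff.mp hmin).elim (·.1) fun h ↦ absurd h.1 hzw.ne
  have hz2 : v (z ^ 2) < v (-(x ^ 2 + y ^ 2)) := by
    rw [Valuation.map_neg, hsq, hxy, one_pow, map_pow, pow_lt_one_iff two_ne_zero]
    exact (le_max_left _ _).trans_lt hzw
  rw [show -x ^ 2 - y ^ 2 + z ^ 2 = -(x ^ 2 + y ^ 2) + z ^ 2 by ring,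
    v.map_add_eq_of_lt_left hz2, Valuation.map_neg, hsq, hxy, one_pow]

/-- Let `S` be a finite extension of `ℚ₃` with normalized valuation `v` in which `-1` is not
a square.  If `x, y, z, w` lie in the valuation ring with `min(v x, v y, v z, v w) = 0`
(i.e. multiplicatively `max = 1`) and `w² = -6x⁴ - 3y⁴ + 2z⁴`, then `v(-x² - y² + z²) = 0`;
in particular it is even. -/
theorem stmt_11 {S : Type*} [Field S] [Algebra ℚ_[3] S] [FiniteDimensional ℚ_[3] S]
    (v : Valuation S (WithZero (Multiplicative ℤ)))
    (hsurj : Function.Surjective v) (h3 : v (3 : S) < 1)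
    (hneg : ¬∃ s : S, s ^ 2 = (-1 : S))
    (x y z w : S)
    (hx : v x ≤ 1) (hy : v y ≤ 1) (hz : v z ≤ 1) (hw : v w ≤ 1)
    (hmin : max (max (v x) (v y)) (max (v z) (v w)) = 1)
    (heq : w ^ 2 = -6 * x ^ 4 - 3 * y ^ 4 + 2 * z ^ 4) :
    v (-x ^ 2 - y ^ 2 + z ^ 2) = 1 :=
  stmt_11_general v h3 hneg x y z w hx hy hz hmin heq
end
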